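/- arXiv:1107.3178 — 6 statements merged into one kernel-verified Lean document; each statement's English description precedes it below -/
import Mathlib

section
/- Let q be a prime power, n ≥ 1, and let F_q denote the finite field with q elements. If F is a subset of the general linear group GL_n(F_q) such that for any two matrices T, S in F there exists a non-zero row vector α in F_q^n with αT = αS, then |F| ≤ q^{n(n-1)/2} · ∏_{i=1}^{n-1} (q^i − 1). -/
/-!
Multiplication in `𝔽_{q^n}`, written in an `𝔽_q`-basis, embeds its `q^n - 1` units into
`GL_n(𝔽_q)` as a set `C` whose pairwise differences are invertible. If `c₁ g` and `c₂ g` both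
lie in an intersecting family, then `(c₁ - c₂) g` is singular, so `c₁ = c₂`: each translate
`C g` meets the family at most once. Hence `(q^n - 1) |𝓕| ≤ |GL_n(𝔽_q)|
= (q^n - 1) q^{n(n-1)/2} ∏_{i=1}^{n-1} (q^i - 1)`.
-/

open Finset Matrix

theorem card_mul_card_le_card_of_mul_mem_unique {G : Type*} [Group G] [Fintype G]
    {C 𝓕 : Finset G} (h : ∀ c₁ ∈ C, ∀ c₂ ∈ C, ∀ g, c₁ * g ∈ 𝓕 → c₂ * g ∈ 𝓕 → c₁ = c₂) :
    #C * #𝓕 ≤ Fintype.card G := by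
  rw [← card_product, ← card_univ]
  refine card_le_card_of_injOn (fun p => p.1⁻¹ * p.2) (fun _ _ => mem_univ _) ?_
  rintro ⟨c₁, t₁⟩ h₁ ⟨c₂, t₂⟩ h₂ (heq : c₁⁻¹ * t₁ = c₂⁻¹ * t₂)
  simp only [coe_product, Set.mem_prod, mem_coe] at h₁ h₂
  have hc : c₁ = c₂ := h c₁ h₁.1 c₂ h₂.1 (c₁⁻¹ * t₁) (by simpa using h₁.2)
    (by simpa [heq] using h₂.2)
  subst hc
  exact Prod.ext rfl (mul_left_cancel heq)

theorem not_isUnit_sub_of_vecMul_eq {m K : Type*} [Fintype m] [DecidableEq m] [Field K]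
    {A B : Matrix m m K} {α : m → K} (hα : α ≠ 0) (h : α ᵥ* A = α ᵥ* B) :
    ¬IsUnit (A - B) := fun hAB =>
  hα <| vecMul_injective_iff_isUnit.mpr hAB <| show α ᵥ* (A - B) = 0 ᵥ* (A - B) by
    rw [vecMul_sub, h, sub_self, zero_vecMul]

theorem card_mul_card_le_card_GL_of_isUnit_sub {ι F : Type*} [Fintype ι] [DecidableEq ι]
    [Field F] [Fintype F] {C 𝓕 : Finset (GL ι F)}
    (hC : ∀ c₁ ∈ C, ∀ c₂ ∈ C, c₁ ≠ c₂ → IsUnit ((c₁ : Matrix ι ι F) - c₂))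
    (h𝓕 : ∀ T ∈ 𝓕, ∀ S ∈ 𝓕, ∃ α : ι → F, α ≠ 0 ∧ α ᵥ* (T : Matrix ι ι F) = α ᵥ* S) :
    #C * #𝓕 ≤ Nat.card (GL ι F) := by
  classical
  rw [Nat.card_eq_fintype_card]
  refine card_mul_card_le_card_of_mul_mem_unique fun c₁ h₁ c₂ h₂ g hg₁ hg₂ => ?_
  by_contra hne
  obtain ⟨α, hα, heq⟩ := h𝓕 _ hg₁ _ hg₂
  refine not_isUnit_sub_of_vecMul_eq hα heq ?_
  simpa only [Units.val_mul, sub_mul] using (hC c₁ h₁ c₂ h₂ hne).mul g.isUnit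

theorem isUnit_leftMulMatrix_sub {F K ι : Type*} [Field F] [Field K] [Algebra F K] [Fintype ι]
    [DecidableEq ι] (b : Module.Basis ι F K) {x y : K} (hxy : x ≠ y) :
    IsUnit (Algebra.leftMulMatrix b x - Algebra.leftMulMatrix b y) := by
  rw [← map_sub]
  exact (sub_ne_zero.mpr hxy).isUnit.map _

theorem exists_finset_GL_card_eq_isUnit_sub_of_basis {F K ι : Type*} [Field F] [Field K]
    [Algebra F K] [Fintype K] [Fintype ι] [DecidableEq ι] (b : Module.Basis ι F K) :
    ∃ C : Finset (GL ι F), #C = Fintype.card K - 1 ∧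
      ∀ c₁ ∈ C, ∀ c₂ ∈ C, c₁ ≠ c₂ → IsUnit ((c₁ : Matrix ι ι F) - c₂) := by
  classical
  let φ : Kˣ →* GL ι F := Units.map (Algebra.leftMulMatrix b : K →* Matrix ι ι F)
  have hφ : Function.Injective φ := Units.map_injective (Algebra.leftMulMatrix_injective b)
  refine ⟨univ.map ⟨φ, hφ⟩, by simp [Fintype.card_units], ?_⟩
  simp only [mem_map, mem_univ, true_and]
  rintro _ ⟨u, rfl⟩ _ ⟨v, rfl⟩ huv
  exact isUnit_leftMulMatrix_sub b fun h => huv (congrArg φ (Units.ext h))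

theorem FiniteField.exists_finset_GL_card_eq_isUnit_sub (F : Type*) [Field F] [Fintype F]
    {n : ℕ} (hn : n ≠ 0) :
    ∃ C : Finset (GL (Fin n) F), #C = Fintype.card F ^ n - 1 ∧
      ∀ c₁ ∈ C, ∀ c₂ ∈ C, c₁ ≠ c₂ → IsUnit ((c₁ : Matrix (Fin n) (Fin n) F) - c₂) := by
  obtain ⟨p, _⟩ := CharP.exists F
  have : Fact p.Prime := ⟨CharP.char_is_prime F p⟩
  have : NeZero n := ⟨hn⟩
  let K := FiniteField.Extension F p n
  have : Fintype K := Fintype.ofFinite K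
  have hK : Fintype.card K = Fintype.card F ^ n := by
    simp only [Fintype.card_eq_nat_card, K, FiniteField.natCard_extension]
  rw [← hK]
  exact exists_finset_GL_card_eq_isUnit_sub_of_basis
    (Module.finBasisOfFinrankEq F K (FiniteField.finrank_extension F p n))

theorem prod_range_pow_sub_pow (q n : ℕ) :
    ∏ i ∈ range n, (q ^ n - q ^ i) = q ^ (n * (n - 1) / 2) * ∏ i ∈ Icc 1 n, (q ^ i - 1) := by
  have hfactor : ∀ i ∈ range n, q ^ n - q ^ i = q ^ i * (q ^ (n - i) - 1) := fun i hi => by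
    rw [Nat.mul_sub, mul_one, ← pow_add, Nat.add_sub_cancel' (mem_range.mp hi).le]
  have hreflect : ∏ i ∈ range n, (q ^ (n - i) - 1) = ∏ i ∈ Icc 1 n, (q ^ i - 1) :=
    prod_nbij' (n - ·) (n - ·) (by simp; omega) (by simp; omega) (by simp; omega)
      (by simp; omega) (fun _ _ => rfl)
  rw [prod_congr rfl hfactor, prod_mul_distrib, prod_pow_eq_pow_sum, sum_range_id, hreflect]

theorem card_GL_fin_eq (F : Type*) [Field F] [Fintype F] {n : ℕ} (hn : n ≠ 0) :
    Nat.card (GL (Fin n) F) = (Fintype.card F ^ n - 1) *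
      (Fintype.card F ^ (n * (n - 1) / 2) * ∏ i ∈ Icc 1 (n - 1), (Fintype.card F ^ i - 1)) := by
  obtain ⟨m, rfl⟩ := Nat.exists_eq_succ_of_ne_zero hn
  rw [card_GL_field, Fin.prod_univ_eq_prod_range (fun i => _ ^ _ - _ ^ i), prod_range_pow_sub_pow,
    prod_Icc_succ_top (by omega)]
  simp only [Nat.succ_sub_one]
  ring

/-- **Erdős–Ko–Rado theorem in general linear groups** (Guo–Wang).
If `𝓕` is an intersecting set in `GL n (F_q)`, i.e. for any `T, S ∈ 𝓕` there is a
non-zero row vector `α` with `α T = α S`, then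
`|𝓕| ≤ q^(n(n-1)/2) * ∏_{i=1}^{n-1} (q^i - 1)`. -/
theorem ekr_general_linear_group
    (F : Type*) [Field F] [Fintype F] (q : ℕ) (hq : Fintype.card F = q)
    (n : ℕ) (hn : 1 ≤ n)
    (𝓕 : Finset (Matrix.GeneralLinearGroup (Fin n) F))
    (h𝓕 : ∀ T ∈ 𝓕, ∀ S ∈ 𝓕, ∃ α : Fin n → F, α ≠ 0 ∧
      Matrix.vecMul α (T : Matrix (Fin n) (Fin n) F) =
        Matrix.vecMul α (S : Matrix (Fin n) (Fin n) F)) :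
    𝓕.card ≤ q ^ (n * (n - 1) / 2) * ∏ i ∈ Finset.Icc 1 (n - 1), (q ^ i - 1) := by
  subst hq
  have hn₀ : n ≠ 0 := Nat.one_le_iff_ne_zero.mp hn
  obtain ⟨C, hCcard, hC⟩ := FiniteField.exists_finset_GL_card_eq_isUnit_sub F hn₀
  have hcount := card_mul_card_le_card_GL_of_isUnit_sub hC h𝓕
  rw [hCcard, card_GL_fin_eq F hn₀] at hcount
  refine Nat.le_of_mul_le_mul_left hcount (Nat.sub_pos_of_lt ?_)
  exact Nat.one_lt_pow hn₀ Fintype.one_lt_card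
end

section
/- Let q be a prime power and n ≥ 1. If I is a set of matrices in GL_n(F_q) such that T − S is invertible for all distinct T, S ∈ I, then |I| ≤ q^n − 1. -/
/-!
Fix a nonzero vector `v`. If `T - S` is invertible then `T v ≠ S v`, so `T ↦ T v` is injective
on `I`; and it misses `0` because every `T ∈ I` is invertible. Hence `|I|` is at most the number
of nonzero vectors of `F_q^n`, which is `q^n - 1`.
-/

open Finset

namespace Matrix

variable {ι R : Type*} [Fintype ι] [DecidableEq ι] [Ring R]

lemma mulVec_ne_zero_of_isUnit {A : Matrix ι ι R} (hA : IsUnit A) {v : ι → R} (hv : v ≠ 0) :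
    A *ᵥ v ≠ 0 :=
  fun h ↦ hv <| mulVec_injective_of_isUnit hA <| by rw [h, mulVec_zero]

lemma injOn_mulVec_of_pairwise_isUnit_sub {s : Set (Matrix ι ι R)}
    (hs : s.Pairwise fun A B ↦ IsUnit (A - B)) {v : ι → R} (hv : v ≠ 0) :
    s.InjOn (· *ᵥ v) := by
  intro A hA B hB hAB
  by_contra hne
  exact mulVec_ne_zero_of_isUnit (hs hA hB hne) hv (by rw [sub_mulVec]; exact sub_eq_zero.2 hAB)

theorem card_le_card_pow_sub_one_of_pairwise_isUnit_sub [Fintype R] [Nontrivial R] [Nonempty ι]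
    {I : Finset (Matrix ι ι R)} (hunit : ∀ A ∈ I, IsUnit A)
    (hsub : (I : Set (Matrix ι ι R)).Pairwise fun A B ↦ IsUnit (A - B)) :
    #I ≤ Fintype.card R ^ Fintype.card ι - 1 := by
  classical
  obtain ⟨v, hv⟩ := exists_ne (0 : ι → R)
  calc #I ≤ #((univ : Finset (ι → R)).erase 0) :=
        card_le_card_of_injOn (· *ᵥ v)
          (fun A hA ↦ mem_erase.2 ⟨mulVec_ne_zero_of_isUnit (hunit A hA) hv, mem_univ _⟩)
          (injOn_mulVec_of_pairwise_isUnit_sub hsub hv)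
    _ = Fintype.card R ^ Fintype.card ι - 1 := by
        rw [card_erase_of_mem (mem_univ _), card_univ, Fintype.card_fun]

end Matrix

/-- If `I` is a set of matrices in `GL n (F_q)` such that `T - S` is invertible for all
distinct `T, S ∈ I`, then `|I| ≤ q^n - 1`. -/
theorem coclique_bound_general_linear_group
    (F : Type*) [Field F] [Fintype F] (q : ℕ) (hq : Fintype.card F = q)
    (n : ℕ) (hn : 1 ≤ n)
    (I : Finset (Matrix.GeneralLinearGroup (Fin n) F))
    (hI : ∀ T ∈ I, ∀ S ∈ I, T ≠ S →
      IsUnit ((T : Matrix (Fin n) (Fin n) F) - (S : Matrix (Fin n) (Fin n) F))) :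
    I.card ≤ q ^ n - 1 := by
  have : Nonempty (Fin n) := ⟨⟨0, hn⟩⟩
  let J := I.map ⟨Units.val, Units.val_injective⟩
  have hunit : ∀ A ∈ J, IsUnit A := by simp [J]
  have hsub : (J : Set (Matrix (Fin n) (Fin n) F)).Pairwise fun A B ↦ IsUnit (A - B) := by
    rintro _ hA _ hB hne
    obtain ⟨T, hT, rfl⟩ := mem_map.1 hA
    obtain ⟨S, hS, rfl⟩ := mem_map.1 hB
    exact hI T hT S hS fun h ↦ hne (congrArg _ h)
  simpa [J, hq] using Matrix.card_le_card_pow_sub_one_of_pairwise_isUnit_sub hunit hsub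
end

section
/- Let q be a prime power and n ≥ 1. There exists a set of q^n − 1 matrices T_1, …, T_{q^n−1} in GL_n(F_q) such that T_i − T_j is invertible for all i ≠ j. -/
/-!
A field `K` with `q ^ n` elements is an `n`-dimensional `F_q`-vector space, and letting `K` act
on itself by left multiplication embeds it in `M_n(F_q)` as an `F_q`-algebra. The images of
the `q ^ n - 1` nonzero elements of `K` are invertible, and so are their pairwise differences,
since these are again images of nonzero elements of `K`.
-/

open Function

theorem FiniteField.exists_extension_finrank_eq_natCard_eq (F : Type*) [Field F] [Finite F]
    (n : ℕ) [NeZero n] :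
    ∃ (K : Type) (_ : Field K) (_ : Finite K) (_ : Algebra F K),
      Module.finrank F K = n ∧ Nat.card K = Nat.card F ^ n := by
  have : Fact (ringChar F).Prime := ⟨CharP.prime_ringChar F⟩
  exact ⟨Extension F (ringChar F) n, inferInstance, inferInstance, inferInstance,
    finrank_extension F _ n, natCard_extension F _ n⟩

theorem RingHom.isUnit_map_sub_map {K R : Type*} [DivisionRing K] [Ring R] (φ : K →+* R)
    {x y : K} (hxy : x ≠ y) : IsUnit (φ x - φ y) := by
  rw [← map_sub]
  exact (IsUnit.mk0 _ (sub_ne_zero.mpr hxy)).map φ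

theorem Function.injective_of_isUnit_sub {ι R : Type*} [Ring R] [Nontrivial R] {f : ι → R}
    (hf : ∀ i j, i ≠ j → IsUnit (f i - f j)) : Injective f := by
  intro i j hij
  by_contra hne
  simpa [hij] using hf i j hne

theorem RingHom.exists_units_isUnit_sub {K R ι : Type*} [DivisionRing K] [Ring R] [Nontrivial R]
    (φ : K →+* R) (e : ι ≃ Kˣ) :
    ∃ T : ι → Rˣ, Injective T ∧ ∀ i j, i ≠ j → IsUnit ((T i : R) - T j) := by
  have hsub : ∀ i j, i ≠ j → IsUnit ((φ (e i) : R) - φ (e j)) := fun i j hij =>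
    φ.isUnit_map_sub_map fun h => hij (e.injective (Units.ext h))
  refine ⟨fun i => Units.map (φ : K →* R) (e i), ?_, hsub⟩
  exact fun i j hij => injective_of_isUnit_sub hsub (congrArg Units.val hij)

/-- There exist `q^n - 1` matrices in `GL n (F_q)` all of whose pairwise differences
are invertible. -/
theorem exists_large_difference_family
    (F : Type*) [Field F] [Fintype F] (q : ℕ) (hq : Fintype.card F = q)
    (n : ℕ) (hn : 1 ≤ n) :
    ∃ T : Fin (q ^ n - 1) → Matrix.GeneralLinearGroup (Fin n) F,
      Function.Injective T ∧
      ∀ i j, i ≠ j →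
        IsUnit ((T i : Matrix (Fin n) (Fin n) F) - (T j : Matrix (Fin n) (Fin n) F)) := by
  have : NeZero n := ⟨by omega⟩
  obtain ⟨K, _, _, _, hrank, hcard⟩ := FiniteField.exists_extension_finrank_eq_natCard_eq F n
  have hunits : Nat.card Kˣ = q ^ n - 1 := by
    rw [Nat.card_units, hcard, Nat.card_eq_fintype_card, hq]
  let b := Module.finBasisOfFinrankEq F K hrank
  exact (Algebra.leftMulMatrix b).toRingHom.exists_units_isUnit_sub
    ((Finite.equivFin Kˣ).trans (finCongr hunits)).symm
end

section
/- Let Γ be a vertex-transitive finite graph on v vertices, let C be a clique of Γ and A a coclique (independent set) of Γ. Then |C| · |A| ≤ v. -/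
/-!
Let `G` be the automorphism group of `Γ`. For each vertex `c`, the map `g ↦ g c` hits every
vertex exactly `|G| / v` times, so exactly `|A| |G| / v` automorphisms send `c` into `A`; summing
over `c ∈ C` counts the pairs `(g, c)` with `g c ∈ A` as `|C| |A| |G| / v`. On the other hand an
automorphism maps the clique `C` to a clique, which meets the coclique `A` at most once, so there
are at most `|G|` such pairs.
-/

open Finset MulAction

namespace MulAction

variable {G α : Type*} [Group G] [MulAction G α]

theorem card_stabilizer_mul_card_of_isPretransitive [IsPretransitive G α] (a : α) :
    Nat.card (stabilizer G a) * Nat.card α = Nat.card G := by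
  rw [← index_stabilizer_of_transitive G a, Subgroup.card_mul_index]

variable [Fintype G] [DecidableEq α] [IsPretransitive G α]

theorem card_filter_smul_eq (a b : α) : #{g : G | g • a = b} = Nat.card (stabilizer G a) := by
  obtain ⟨h, rfl⟩ := exists_smul_eq G a b
  rw [← Fintype.card_subtype, ← Nat.card_eq_fintype_card]
  exact Nat.card_congr
    { toFun := fun g => ⟨h⁻¹ * g, by simp [mem_stabilizer_iff, mul_smul, g.2]⟩
      invFun := fun g => ⟨h * g, by simp [mul_smul, mem_stabilizer_iff.mp g.2]⟩
      left_inv := fun g => by simp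
      right_inv := fun g => by simp }

theorem card_filter_smul_mem_mul_card [Fintype α] (a : α) (A : Finset α) :
    #{g : G | g • a ∈ A} * Fintype.card α = #A * Fintype.card G := by
  have hfiber : #{g : G | g • a ∈ A} = ∑ b ∈ A, #{g : G | g • a = b} := by
    refine (card_eq_sum_card_fiberwise (f := (· • a)) fun g hg => (mem_filter.mp hg).2).trans ?_
    refine sum_congr rfl fun b hb => ?_
    rw [filter_filter]
    exact congrArg card (filter_congr fun g _ => and_iff_right_of_imp fun hg => (hg ▸ hb :))
  simp only [hfiber, card_filter_smul_eq, sum_const, smul_eq_mul, mul_assoc,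
    Fintype.card_eq_nat_card, card_stabilizer_mul_card_of_isPretransitive]

theorem card_mul_card_le_of_smul_mem_injOn [Fintype α] {C A : Finset α}
    (h : ∀ g : G, ∀ c ∈ C, ∀ c' ∈ C, g • c ∈ A → g • c' ∈ A → c = c') :
    #C * #A ≤ Fintype.card α := by
  have hmeet : ∀ g : G, #{c ∈ C | g • c ∈ A} ≤ 1 := fun g =>
    card_le_one.mpr fun c hc c' hc' => by
      rw [mem_filter] at hc hc'
      exact h g c hc.1 c' hc'.1 hc.2 hc'.2
  have hcount : #C * #A * Fintype.card G ≤ Fintype.card α * Fintype.card G := calc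
    #C * #A * Fintype.card G = (∑ c ∈ C, #{g : G | g • c ∈ A}) * Fintype.card α := by
      rw [sum_mul, sum_congr rfl fun c _ => card_filter_smul_mem_mul_card c A, sum_const,
        smul_eq_mul, mul_assoc]
    _ = (∑ g : G, #{c ∈ C | g • c ∈ A}) * Fintype.card α := by
      congr 1
      exact sum_card_bipartiteAbove_eq_sum_card_bipartiteBelow (r := fun c (g : G) => g • c ∈ A)
    _ ≤ (∑ _g : G, 1) * Fintype.card α := by gcongr with g; exact hmeet g
    _ = Fintype.card α * Fintype.card G := by simp [mul_comm]
  exact Nat.le_of_mul_le_mul_right hcount Fintype.card_pos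

end MulAction

/-- **Clique–coclique bound** (Cameron–Ku): in a vertex-transitive graph on `v` vertices,
if `C` is a clique and `A` is a coclique then `|C| * |A| ≤ v`. -/
theorem clique_coclique_bound
    (V : Type*) [Fintype V] (Γ : SimpleGraph V)
    (htrans : ∀ u v : V, ∃ φ : Γ ≃g Γ, φ u = v)
    (C A : Finset V)
    (hC : Γ.IsClique (C : Set V))
    (hA : ∀ a ∈ A, ∀ b ∈ A, a ≠ b → ¬ Γ.Adj a b) :
    C.card * A.card ≤ Fintype.card V := by
  classical
  have : IsPretransitive (Γ ≃g Γ) V := ⟨htrans⟩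
  have : Finite (Γ ≃g Γ) := Finite.of_injective _ DFunLike.coe_injective
  have := Fintype.ofFinite (Γ ≃g Γ)
  refine card_mul_card_le_of_smul_mem_injOn (G := Γ ≃g Γ) fun φ c hc c' hc' hφc hφc' => ?_
  by_contra hne
  exact hA _ hφc _ hφc' (φ.injective.ne hne) (φ.map_adj_iff.mpr (hC hc hc' hne))
end

section
/- Let q be a prime power and let n, l be positive integers. An n-spread of F_q^l, i.e., a collection {W_1, …, W_t} of n-dimensional subspaces of F_q^l such that every non-zero vector of F_q^l belongs to exactly one W_i, exists if and only if n divides l. -/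
/-!
The nonzero vectors of `F_q^l` are partitioned by the `q^n - 1` nonzero vectors of each member
of an `n`-spread, so `q^n - 1 ∣ q^l - 1`; since `gcd (q^a - 1, q^b - 1) = q^(gcd a b) - 1`, this
forces `n ∣ l`. Conversely, if `l = n m`, then `F_q^l ≅ (F_{q^n})^m` as `F_q`-spaces, and the
`F_{q^n}`-lines of `(F_{q^n})^m` form an `n`-spread.
-/

open Module

theorem Nat.dvd_of_pow_sub_one_dvd_pow_sub_one {q m n : ℕ} (hq : 1 < q)
    (h : q ^ m - 1 ∣ q ^ n - 1) : m ∣ n := by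
  have hgcd : q ^ m - 1 = q ^ Nat.gcd m n - 1 := by
    rw [← Nat.pow_sub_one_gcd_pow_sub_one, Nat.gcd_eq_left h]
  have hpow := Nat.pow_right_injective hq
    (Nat.sub_one_cancel (Nat.pow_pos (by omega)) (Nat.pow_pos (by omega)) hgcd)
  exact Nat.gcd_eq_left_iff_dvd.mp hpow.symm

namespace Submodule

section Semiring

variable {K V V' : Type*} [Semiring K] [AddCommMonoid V] [Module K V] [AddCommMonoid V']
  [Module K V']

def IsSpread (S : Set (Submodule K V)) (n : ℕ) : Prop :=
  (∀ W ∈ S, finrank K W = n) ∧ ∀ v : V, v ≠ 0 → ∃! W, W ∈ S ∧ v ∈ W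

variable {S : Set (Submodule K V)} {n : ℕ}

theorem IsSpread.map (h : IsSpread S n) (e : V ≃ₗ[K] V') :
    IsSpread (map (e : V →ₗ[K] V') '' S) n := by
  refine ⟨?_, fun v hv => ?_⟩
  · rintro _ ⟨W, hW, rfl⟩
    rw [LinearEquiv.finrank_map_eq, h.1 W hW]
  · obtain ⟨W, ⟨hWS, hvW⟩, huniq⟩ := h.2 (e.symm v) (by simpa using hv)
    refine ⟨_, ⟨⟨W, hWS, rfl⟩, (mem_map_equiv _).mpr hvW⟩, ?_⟩
    rintro _ ⟨⟨W', hW'S, rfl⟩, hvW'⟩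
    rw [huniq W' ⟨hW'S, (mem_map_equiv _).mp hvW'⟩]

end Semiring

section FiniteField

variable {F V : Type*} [Field F] [AddCommGroup V] [Module F V] [Finite V]
  {S : Set (Submodule F V)} {n : ℕ}

theorem IsSpread.natCard_sub_one_eq (h : IsSpread S n) :
    Nat.card V - 1 = S.ncard * (Nat.card F ^ n - 1) := by
  classical
  have := Fintype.ofFinite V
  have hS : S.Finite := Set.toFinite S
  have hcount := Finset.card_mul_eq_card_mul (fun (v : V) (W : Submodule F V) => v ∈ W)
    (s := Finset.univ.erase 0) (t := hS.toFinset) (m := 1) (n := Nat.card F ^ n - 1) ?_ ?_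
  · rwa [mul_one, Finset.card_erase_of_mem (Finset.mem_univ _), Finset.card_univ,
      ← Nat.card_eq_fintype_card, ← Set.ncard_eq_toFinset_card S hS] at hcount
  · intro v hv
    obtain ⟨W, hW, huniq⟩ := h.2 v (Finset.ne_of_mem_erase hv)
    refine Finset.card_eq_one.mpr ⟨W, Finset.eq_singleton_iff_unique_mem.mpr ⟨?_, fun W' hW' => ?_⟩⟩
    · simpa [Finset.mem_bipartiteAbove] using hW
    · exact huniq W' (by simpa [Finset.mem_bipartiteAbove] using hW')
  · intro W hW
    rw [Set.Finite.mem_toFinset] at hW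
    have hcardW : Nat.card W = Nat.card F ^ n := by
      rw [Module.natCard_eq_pow_finrank (K := F), h.1 W hW]
    have hbelow : (Finset.univ.erase 0).bipartiteBelow (fun (v : V) W => v ∈ W) W =
        (Finset.univ.filter (· ∈ W)).erase 0 := by
      ext v
      simp [Finset.mem_bipartiteBelow, and_comm]
    rw [hbelow, Finset.card_erase_of_mem (by simp), ← hcardW, Nat.card_eq_fintype_card,
      Fintype.card_subtype]

theorem IsSpread.dvd_finrank [Finite F] (h : IsSpread S n) : n ∣ finrank F V := by
  refine Nat.dvd_of_pow_sub_one_dvd_pow_sub_one (Finite.one_lt_card (α := F)) ?_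
  rw [← Module.natCard_eq_pow_finrank, h.natCard_sub_one_eq]
  exact dvd_mul_left _ _

end FiniteField

theorem span_singleton_eq_of_mem {K V : Type*} [DivisionRing K] [AddCommGroup V] [Module K V]
    {u v : V} (hv : v ≠ 0) (hvu : v ∈ K ∙ u) : (K ∙ u) = K ∙ v := by
  obtain ⟨a, rfl⟩ := mem_span_singleton.mp hvu
  exact span_singleton_eq_span_singleton.mpr ⟨Units.mk0 a (left_ne_zero_of_smul hv), rfl⟩

theorem isSpread_restrictScalars_span_singleton (F K V : Type*) [CommSemiring F] [DivisionRing K]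
    [Algebra F K] [AddCommGroup V] [Module K V] [Module F V] [IsScalarTower F K V] :
    IsSpread ((fun v => (K ∙ v).restrictScalars F) '' ({0}ᶜ : Set V)) (finrank F K) := by
  refine ⟨?_, fun v hv => ⟨_, ⟨⟨v, hv, rfl⟩, mem_span_singleton_self v⟩, ?_⟩⟩
  · rintro _ ⟨v, hv, rfl⟩
    exact ((LinearEquiv.toSpanNonzeroSingleton K V v hv).restrictScalars F).finrank_eq.symm
  · rintro _ ⟨⟨u, -, rfl⟩, hvu⟩
    exact congrArg (restrictScalars F) (span_singleton_eq_of_mem hv hvu)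

theorem exists_isSpread_of_dvd_finrank (F V : Type*) [Field F] [Finite F] [AddCommGroup V]
    [Module F V] [FiniteDimensional F V] {n : ℕ} (hn : n ≠ 0) (hdvd : n ∣ finrank F V) :
    ∃ S : Set (Submodule F V), IsSpread S n := by
  obtain ⟨m, hm⟩ := hdvd
  obtain ⟨p, _⟩ := CharP.exists F
  have : Fact p.Prime := ⟨CharP.char_is_prime F p⟩
  have : NeZero n := ⟨hn⟩
  let K := FiniteField.Extension F p n
  obtain ⟨e⟩ : Nonempty ((Fin m → K) ≃ₗ[F] V) :=
    FiniteDimensional.nonempty_linearEquiv_of_finrank_eq <| by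
      rw [hm, finrank_pi_fintype, Finset.sum_const, FiniteField.finrank_extension]
      simp [mul_comm]
  have hS := (isSpread_restrictScalars_span_singleton F K (Fin m → K)).map e
  rw [FiniteField.finrank_extension] at hS
  exact ⟨_, hS⟩

end Submodule

theorem spread_exists_iff_dvd_general
    (F : Type*) [Field F] [Fintype F]
    (n l : ℕ) (hn : 1 ≤ n) :
    (∃ 𝒮 : Set (Submodule F (Fin l → F)),
        (∀ W ∈ 𝒮, Module.finrank F W = n) ∧
        (∀ v : Fin l → F, v ≠ 0 → ∃! W : Submodule F (Fin l → F), W ∈ 𝒮 ∧ v ∈ W)) ↔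
      n ∣ l := by
  refine ⟨fun ⟨S, hS⟩ => ?_, fun hdvd => ?_⟩
  · simpa using Submodule.IsSpread.dvd_finrank (S := S) hS
  · exact Submodule.exists_isSpread_of_dvd_finrank F _ (by omega) (by simpa using hdvd)

/-- An `n`-spread of `F_q^l` (a collection of `n`-dimensional subspaces such that every
non-zero vector lies in exactly one of them) exists if and only if `n` divides `l`. -/
theorem spread_exists_iff_dvd
    (F : Type*) [Field F] [Fintype F] (q : ℕ) (hq : Fintype.card F = q)
    (n l : ℕ) (hn : 1 ≤ n) (hl : 1 ≤ l) :
    (∃ 𝒮 : Set (Submodule F (Fin l → F)),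
        (∀ W ∈ 𝒮, Module.finrank F W = n) ∧
        (∀ v : Fin l → F, v ≠ 0 → ∃! W : Submodule F (Fin l → F), W ∈ 𝒮 ∧ v ∈ W)) ↔
      n ∣ l :=
  spread_exists_iff_dvd_general F n l hn
end

section
/- Let n ≥ 1 and let F be a subset of the symmetric group S_n such that for any f, g ∈ F there exists x ∈ {1, …, n} with f(x) = g(x). Then |F| ≤ (n−1)!. -/
/-!
Partition `Sₙ` into the cosets `f · R` of the rotation group `R = {x ↦ x + a}` of `ℤ/n`.
Two distinct elements `f ∘ (· + a)` and `f ∘ (· + b)` of one coset agree nowhere, so an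
intersecting family meets each coset at most once: `|F| · n ≤ n!`.
-/

open Finset Equiv

def IsIntersecting {G : Type*} (α : Type*) [SMul G α] (F : Set G) : Prop :=
  ∀ f ∈ F, ∀ g ∈ F, ∃ x : α, f • x = g • x

theorem IsIntersecting.card_mul_card_le {G α : Type*} [Group G] [MulAction G α] [Fintype G]
    {F H : Finset G} (hF : IsIntersecting α (F : Set G))
    (hH : ∀ h ∈ H, ∀ k ∈ H, ∀ x : α, h • x = k • x → h = k) :
    #F * #H ≤ Fintype.card G := by
  rw [← card_product, ← card_univ]
  refine card_le_card_of_injOn (fun p ↦ p.1 * p.2⁻¹) (fun _ _ ↦ mem_coe.2 (mem_univ _)) ?_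
  rintro ⟨f, h⟩ hfh ⟨g, k⟩ hgk hmul
  simp only [coe_product, Set.mem_prod, mem_coe] at hfh hgk hmul
  obtain ⟨x, hx⟩ := hF f hfh.1 g hgk.1
  have hquot : g⁻¹ * f = k⁻¹ * h := by
    rw [inv_mul_eq_iff_eq_mul, ← mul_assoc, ← hmul, inv_mul_cancel_right]
  have hhk : h = k := hH h hfh.2 k hgk.2 x <| by
    rw [← inv_smul_eq_iff, ← mul_smul, ← hquot, mul_smul, hx, inv_smul_smul]
  subst hhk
  simpa using hmul

theorem IsIntersecting.card_mul_card_le_factorial {A : Type*} [AddGroup A] [Fintype A]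
    [DecidableEq A] {F : Finset (Perm A)} (hF : IsIntersecting A (F : Set (Perm A))) :
    #F * Fintype.card A ≤ (Fintype.card A).factorial := by
  have addRight_injective : Function.Injective (Equiv.addRight : A → Perm A) :=
    fun a b hab ↦ by simpa using congr($hab 0)
  have := hF.card_mul_card_le (H := univ.map ⟨_, addRight_injective⟩) <| by
    simp [Perm.smul_def]
  rwa [card_map, card_univ, Fintype.card_perm] at this

theorem deza_frankl_general
    (n : ℕ) (𝓕 : Finset (Equiv.Perm (Fin n)))
    (h𝓕 : ∀ f ∈ 𝓕, ∀ g ∈ 𝓕, ∃ x : Fin n, f x = g x) :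
    𝓕.card ≤ Nat.factorial (n - 1) := by
  obtain _ | m := n
  · simpa using card_le_univ 𝓕
  · have hF : IsIntersecting (Fin (m + 1)) (𝓕 : Set (Perm (Fin (m + 1)))) := by
      simpa [IsIntersecting, Perm.smul_def] using h𝓕
    have := hF.card_mul_card_le_factorial
    rw [Fintype.card_fin, Nat.factorial_succ, mul_comm] at this
    simpa using Nat.le_of_mul_le_mul_left this m.succ_pos

/-- **Deza–Frankl**: an intersecting family of permutations of `n` points has size at
most `(n-1)!`. -/
theorem deza_frankl
    (n : ℕ) (hn : 1 ≤ n) (𝓕 : Finset (Equiv.Perm (Fin n)))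
    (h𝓕 : ∀ f ∈ 𝓕, ∀ g ∈ 𝓕, ∃ x : Fin n, f x = g x) :
    𝓕.card ≤ Nat.factorial (n - 1) :=
  deza_frankl_general n 𝓕 h𝓕
end
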